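/- For every 1 ≤ p < ∞, every f ∈ L^p(G_m) and every n ∈ ℕ, one has ∫_{G_m} ‖f(·+t) − f‖_{L^p(G_m)} · |K_{M_n}(t)| dμ(t) ≤ R² Σ_{s=0}^{n} (M_s/M_n) ω_p(1/M_s, f). -/

import Mathlib

/-!
Writing `M_n K_{M_n} = ∑_{k<M_n} D_k + D_{M_n}` and splitting `k = j M_{n-1} + l`, Paley's lemma
`D_{M_s} = M_s 1_{I_s}` gives by induction on `n` the pointwise bound
`|K_{M_n}| ≤ 1_{I_n} + ∑_{t<n} M_t (m_t - 1) 1_{V_t}`, where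
`V_t = {x : x_k = 0 for k < n, k ≠ t} ⊆ I_t` is a subgroup of index `M_n / m_t`, hence of Haar
measure `m_t / M_n`. On `I_t` the translation modulus is at most `ω_p(1/M_t, f)`, so integrating
the bound yields the estimate with the constants `(m_t - 1) m_t ≤ R²` and `1 ≤ R²`.
-/

open MeasureTheory Filter Finset Asymptotics ENNReal NNReal

noncomputable section

namespace VilenkinPaper

/-- The Vilenkin group `G_m = ∏_k ℤ_{m_k}`. -/
abbrev G (m : ℕ → ℕ) : Type := ∀ k, ZMod (m k)

/-- The generalized powers `M_0 = 1`, `M_{k+1} = m_k M_k`. -/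
def M (m : ℕ → ℕ) : ℕ → ℕ
  | 0 => 1
  | k + 1 => m k * M m k

/-- The basic neighborhoods `I_n = {y : y_0 = ⋯ = y_{n-1} = 0}`. -/
def I (m : ℕ → ℕ) (n : ℕ) : Set (G m) := {y | ∀ k < n, y k = 0}

/-- The generalized Rademacher functions `r_k(x) = exp(2πi x_k / m_k)`. -/
def rad (m : ℕ → ℕ) (k : ℕ) (x : G m) : ℂ :=
  Complex.exp (2 * Real.pi * Complex.I * ((x k).val : ℂ) / (m k : ℂ))

/-- The `j`-th digit of `n` in the base determined by `m`. -/
def digit (m : ℕ → ℕ) (n j : ℕ) : ℕ := (n / M m j) % m j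

/-- The Vilenkin functions `ψ_n = ∏_k r_k^{n_k}`. -/
def psi (m : ℕ → ℕ) (n : ℕ) (x : G m) : ℂ :=
  ∏ᶠ k, rad m k x ^ digit m n k

/-- Vilenkin-Fourier coefficient `f̂(k) = ∫ f ψ̄_k dμ`. -/
def fourierCoeff (m : ℕ → ℕ) (μ : Measure (G m)) (f : G m → ℂ) (k : ℕ) : ℂ :=
  ∫ x, f x * (starRingEnd ℂ) (psi m k x) ∂μ

/-- Partial sums `S_n f = ∑_{k=0}^{n-1} f̂(k) ψ_k`. -/
def S (m : ℕ → ℕ) (μ : Measure (G m)) (n : ℕ) (f : G m → ℂ) (x : G m) : ℂ :=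
  ∑ k ∈ Finset.range n, fourierCoeff m μ f k * psi m k x

/-- Fejér means `σ_n f = (1/n) ∑_{k=1}^n S_k f`. -/
def sigma (m : ℕ → ℕ) (μ : Measure (G m)) (n : ℕ) (f : G m → ℂ) (x : G m) : ℂ :=
  (n : ℂ)⁻¹ * ∑ k ∈ Finset.Icc 1 n, S m μ k f x

/-- Dirichlet kernels `D_n = ∑_{k=0}^{n-1} ψ_k`. -/
def D (m : ℕ → ℕ) (n : ℕ) (x : G m) : ℂ := ∑ k ∈ Finset.range n, psi m k x

/-- Fejér kernels `K_n = (1/n) ∑_{k=1}^n D_k`. -/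
def K (m : ℕ → ℕ) (n : ℕ) (x : G m) : ℂ := (n : ℂ)⁻¹ * ∑ k ∈ Finset.Icc 1 n, D m k x

/-- Convolution `(g ∗ f)(x) = ∫ f(t) g(x - t) dμ(t)`. -/
def conv (m : ℕ → ℕ) (μ : Measure (G m)) (g f : G m → ℂ) (x : G m) : ℂ :=
  ∫ t, f t * g (x - t) ∂μ

/-- `Q_n = ∑_{k=0}^{n-1} q_k`. -/
def Q (q : ℕ → ℝ) (n : ℕ) : ℝ := ∑ k ∈ Finset.range n, q k

/-- Nörlund means `t_n f = (1/Q_n) ∑_{k=1}^n q_{n-k} S_k f`. -/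
def T (m : ℕ → ℕ) (μ : Measure (G m)) (q : ℕ → ℝ) (n : ℕ) (f : G m → ℂ) (x : G m) : ℂ :=
  ((Q q n : ℝ) : ℂ)⁻¹ * ∑ k ∈ Finset.Icc 1 n, ((q (n - k) : ℝ) : ℂ) * S m μ k f x

/-- The modulus of continuity `ω_p(1/M_n, f) = sup_{t ∈ I_n} ‖f(·+t) - f‖_p`. -/
def omega (m : ℕ → ℕ) (μ : Measure (G m)) (p : ℝ≥0∞) (f : G m → ℂ) (n : ℕ) : ℝ :=
  ⨆ t ∈ I m n, (eLpNorm (fun x => f (x + t) - f x) p μ).toReal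


section Digits

variable {m : ℕ → ℕ}

lemma M_eq_prod (n : ℕ) : M m n = ∏ k ∈ range n, m k := by
  induction n with
  | zero => rfl
  | succ n ih => rw [prod_range_succ, ← ih, M, mul_comm]

lemma M_dvd_M {a b : ℕ} (h : a ≤ b) : M m a ∣ M m b := by
  rw [M_eq_prod, M_eq_prod]
  exact prod_dvd_prod_of_subset _ _ _ (range_subset_range.2 h)

lemma mem_I_succ {n : ℕ} {x : G m} : x ∈ I m (n + 1) ↔ x ∈ I m n ∧ x n = 0 := by
  simp only [I, Set.mem_ofPred_eq, Nat.lt_succ_iff_lt_or_eq, or_imp, forall_and, forall_eq]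

lemma mul_M_add_lt_M_succ {j l n : ℕ} (hj : j < m n) (hl : l < M m n) :
    j * M m n + l < M m (n + 1) :=
  calc j * M m n + l < (j + 1) * M m n := by rw [Nat.succ_mul]; omega
    _ ≤ M m (n + 1) := by rw [M]; exact Nat.mul_le_mul_right _ hj

lemma digit_eq_mod_M_succ_div (N t : ℕ) : digit m N t = N % M m (t + 1) / M m t := by
  rw [digit, M, mul_comm, Nat.mod_mul_right_div_self]

lemma digit_mul_M_add_of_lt {j l n t : ℕ} (ht : t < n) :
    digit m (j * M m n + l) t = digit m l t := by
  rw [digit_eq_mod_M_succ_div, digit_eq_mod_M_succ_div,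
    Nat.add_mod, Nat.mod_eq_zero_of_dvd (dvd_mul_of_dvd_right (M_dvd_M ht) j), zero_add,
    Nat.mod_mod]

variable [∀ k, NeZero (m k)]

lemma M_pos (n : ℕ) : 0 < M m n :=
  M_eq_prod (m := m) n ▸ prod_pos fun k _ => Nat.pos_of_neZero (m k)

lemma digit_eq_zero_of_lt_M {l n t : ℕ} (hl : l < M m n) (ht : n ≤ t) : digit m l t = 0 := by
  rw [digit, Nat.div_eq_of_lt (hl.trans_le (Nat.le_of_dvd (M_pos t) (M_dvd_M ht))), Nat.zero_mod]

lemma digit_mul_M_add_self {j l n : ℕ} (hj : j < m n) (hl : l < M m n) :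
    digit m (j * M m n + l) n = j := by
  rw [digit, add_comm, Nat.add_mul_div_right _ _ (M_pos n), Nat.div_eq_of_lt hl, zero_add,
    Nat.mod_eq_of_lt hj]

lemma psi_eq_prod_range {l n : ℕ} (hl : l < M m n) (x : G m) :
    psi m l x = ∏ t ∈ range n, rad m t x ^ digit m l t := by
  refine finprod_eq_prod_of_mulSupport_subset _ fun t ht => ?_
  by_contra htn
  refine ht (show rad m t x ^ digit m l t = 1 from ?_)
  rw [digit_eq_zero_of_lt_M hl (not_lt.1 (by simpa using htn)), pow_zero]

lemma psi_mul_M_add {j l n : ℕ} (hj : j < m n) (hl : l < M m n) (x : G m) :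
    psi m (j * M m n + l) x = rad m n x ^ j * psi m l x := by
  rw [psi_eq_prod_range (mul_M_add_lt_M_succ hj hl), prod_range_succ, digit_mul_M_add_self hj hl,
    psi_eq_prod_range hl, mul_comm]
  congr 1
  exact prod_congr rfl fun t ht => by rw [digit_mul_M_add_of_lt (mem_range.1 ht)]

end Digits

section Characters

variable {m : ℕ → ℕ} [∀ k, NeZero (m k)]

lemma rad_eq_stdAddChar (k : ℕ) (x : G m) : rad m k x = ZMod.stdAddChar (x k) := by
  rw [ZMod.stdAddChar_apply, ZMod.toCircle_apply]
  rfl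

lemma norm_rad (k : ℕ) (x : G m) : ‖rad m k x‖ = 1 := by
  rw [rad_eq_stdAddChar, ZMod.stdAddChar_apply, Circle.norm_coe]

lemma rad_eq_one_iff (k : ℕ) (x : G m) : rad m k x = 1 ↔ x k = 0 := by
  rw [rad_eq_stdAddChar, ← AddChar.map_zero_eq_one (ZMod.stdAddChar (N := m k)),
    ZMod.injective_stdAddChar.eq_iff]

lemma rad_pow_self (k : ℕ) (x : G m) : rad m k x ^ m k = 1 := by
  rw [rad_eq_stdAddChar, ← AddChar.map_nsmul_eq_pow, nsmul_eq_mul, ZMod.natCast_self, zero_mul,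
    AddChar.map_zero_eq_one]

lemma geom_sum_rad (k : ℕ) (x : G m) :
    ∑ j ∈ range (m k), rad m k x ^ j = if x k = 0 then (m k : ℂ) else 0 := by
  split_ifs with h
  · simp [(rad_eq_one_iff k x).2 h]
  · rw [geom_sum_eq (mt (rad_eq_one_iff k x).1 h), rad_pow_self, sub_self, zero_div]

lemma norm_sum_geom_sum_rad_le (k : ℕ) (x : G m) :
    ‖∑ j ∈ range (m k), ∑ i ∈ range j, rad m k x ^ i‖ ≤ m k * (m k - 1) := by
  have hj : ∀ j ∈ range (m k), ‖∑ i ∈ range j, rad m k x ^ i‖ ≤ m k - 1 := fun j hj => by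
    refine (norm_sum_le _ _).trans ?_
    simp only [norm_pow, norm_rad, one_pow, sum_const, card_range, nsmul_eq_mul, mul_one]
    have := mem_range.1 hj
    rw [le_sub_iff_add_le]
    exact_mod_cast this
  refine (norm_sum_le _ _).trans ((sum_le_sum hj).trans ?_)
  rw [sum_const, card_range, nsmul_eq_mul]

end Characters

lemma sum_range_mul_eq_sum_sum {β : Type*} [AddCommMonoid β] (f : ℕ → β) (a b : ℕ) :
    ∑ k ∈ range (a * b), f k = ∑ j ∈ range a, ∑ l ∈ range b, f (j * b + l) := by
  induction a with
  | zero => simp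
  | succ a ih => rw [Nat.succ_mul, sum_range_add, ih, sum_range_succ]

lemma K_eq {m : ℕ → ℕ} (N : ℕ) (x : G m) :
    K m N x = (N : ℂ)⁻¹ * (∑ k ∈ range N, D m k x + D m N x) := by
  rw [K, ← sum_range_succ, sum_range_succ', D, sum_range_zero, add_zero, range_eq_Ico,
    Finset.sum_Ico_add' (fun k => D m k x) 0 N 1, zero_add, Finset.Ico_add_one_right_eq_Icc]

section Dirichlet

variable {m : ℕ → ℕ} [∀ k, NeZero (m k)]

lemma D_mul_M_add {j l n : ℕ} (hj : j < m n) (hl : l ≤ M m n) (x : G m) :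
    D m (j * M m n + l) x = D m (j * M m n) x + rad m n x ^ j * D m l x := by
  rw [D, sum_range_add, D, D, mul_sum]
  exact congrArg _ (sum_congr rfl fun i hi => psi_mul_M_add hj ((mem_range.1 hi).trans_le hl) x)

lemma D_mul_M {j n : ℕ} (hj : j ≤ m n) (x : G m) :
    D m (j * M m n) x = (∑ i ∈ range j, rad m n x ^ i) * D m (M m n) x := by
  induction j with
  | zero => simp [D]
  | succ j ih =>
    rw [Nat.succ_mul, D_mul_M_add (by omega) le_rfl, ih (by omega), sum_range_succ]
    ring

lemma D_M (n : ℕ) (x : G m) : D m (M m n) x = (I m n).indicator (fun _ => (M m n : ℂ)) x := by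
  induction n with
  | zero => simp [M, D, I, psi_eq_prod_range (n := 0) one_pos]
  | succ n ih =>
    rw [show M m (n + 1) = m n * M m n from rfl, D_mul_M le_rfl, geom_sum_rad, ih]
    by_cases hI : x ∈ I m n <;> by_cases hn : x n = 0 <;> simp [hI, hn, mem_I_succ]

def DSum (m : ℕ → ℕ) (n : ℕ) (x : G m) : ℂ := ∑ k ∈ range (M m n), D m k x

lemma DSum_succ (n : ℕ) (x : G m) :
    DSum m (n + 1) x = M m n * ((∑ j ∈ range (m n), ∑ i ∈ range j, rad m n x ^ i) * D m (M m n) x)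
      + (∑ j ∈ range (m n), rad m n x ^ j) * DSum m n x := by
  have hblock : ∀ j ∈ range (m n), ∑ l ∈ range (M m n), D m (j * M m n + l) x
      = M m n * ((∑ i ∈ range j, rad m n x ^ i) * D m (M m n) x) + rad m n x ^ j * DSum m n x := by
    intro j hj
    rw [sum_congr rfl fun l hl => D_mul_M_add (mem_range.1 hj) (mem_range.1 hl).le x,
      sum_add_distrib, sum_const, card_range, nsmul_eq_mul, D_mul_M (mem_range.1 hj).le, DSum,
      mul_sum]
  rw [DSum, show M m (n + 1) = m n * M m n from rfl, sum_range_mul_eq_sum_sum, sum_congr rfl hblock,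
    sum_add_distrib, ← mul_sum, ← sum_mul, ← sum_mul]

end Dirichlet

section ZeroOn

variable {m : ℕ → ℕ}

def zeroOn (m : ℕ → ℕ) (s : Finset ℕ) : AddSubgroup (G m) :=
  (AddMonoidHom.pi fun k : s => Pi.evalAddMonoidHom (fun k => ZMod (m k)) k.1).ker

lemma mem_zeroOn {s : Finset ℕ} {x : G m} : x ∈ zeroOn m s ↔ ∀ k ∈ s, x k = 0 := by
  simp [zeroOn, AddMonoidHom.mem_ker, funext_iff]

lemma zeroOn_range (n : ℕ) : (zeroOn m (range n) : Set (G m)) = I m n := by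
  ext x
  simp [mem_zeroOn, I]

lemma index_zeroOn (s : Finset ℕ) : (zeroOn m s).index = ∏ k ∈ s, m k := by
  have hsurj : Function.Surjective
      (AddMonoidHom.pi fun k : s => Pi.evalAddMonoidHom (fun k => ZMod (m k)) k.1) :=
    fun y => ⟨fun k => if h : k ∈ s then y ⟨k, h⟩ else 0, by ext k; simp⟩
  rw [zeroOn, AddSubgroup.index_ker, AddMonoidHom.range_eq_top.2 hsurj, AddSubgroup.card_top,
    Nat.card_pi, ← prod_coe_sort s]
  simp

lemma measurableSet_zeroOn (s : Finset ℕ) : MeasurableSet (zeroOn m s : Set (G m)) := by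
  have : (zeroOn m s : Set (G m)) = ⋂ k ∈ s, {x | x k = 0} := by
    ext x
    simp [mem_zeroOn]
  rw [this]
  exact Finset.measurableSet_biInter s fun k _ => measurable_pi_apply k (measurableSet_singleton 0)

end ZeroOn

section KernelBound

variable {m : ℕ → ℕ}

def kernelBound (m : ℕ → ℕ) (n : ℕ) (x : G m) : ℝ :=
  ∑ t ∈ range n, (zeroOn m ((range n).erase t) : Set (G m)).indicator
    (fun _ => (M m t : ℝ) * (m t - 1)) x

lemma kernelBound_succ (n : ℕ) (x : G m) :
    kernelBound m (n + 1) x = (I m n).indicator (fun _ => (M m n : ℝ) * (m n - 1)) x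
      + if x n = 0 then kernelBound m n x else 0 := by
  have hV : ∀ t ∈ range n, (range (n + 1)).erase t = insert n ((range n).erase t) := fun t ht => by
    rw [range_add_one, erase_insert_of_ne (mem_range.1 ht).ne']
  rw [kernelBound, sum_range_succ, add_comm, range_add_one, erase_insert notMem_range_self,
    ← zeroOn_range, sum_congr rfl fun t ht => by rw [← range_add_one, hV t ht]]
  congr 1
  split_ifs with hx
  · refine sum_congr rfl fun t _ => ?_
    simp only [Set.indicator, SetLike.mem_coe, mem_zeroOn, forall_mem_insert, hx, true_and]
  · refine sum_eq_zero fun t _ => Set.indicator_of_notMem ?_ _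
    simp [mem_zeroOn, hx]

variable [∀ k, NeZero (m k)]

lemma norm_DSum_le (n : ℕ) (x : G m) : ‖DSum m n x‖ ≤ M m n * kernelBound m n x := by
  induction n with
  | zero => simp [DSum, M, D, kernelBound]
  | succ n ih =>
    have hD : ‖D m (M m n) x‖ = (I m n).indicator (fun _ => (M m n : ℝ)) x := by
      rw [D_M, norm_indicator_eq_indicator_norm]
      simp
    have hS : ‖∑ j ∈ range (m n), rad m n x ^ j‖ = if x n = 0 then (m n : ℝ) else 0 := by
      rw [geom_sum_rad]
      split_ifs <;> simp
    have hC := norm_sum_geom_sum_rad_le n x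
    rw [DSum_succ, kernelBound_succ, show M m (n + 1) = m n * M m n from rfl]
    refine (norm_add_le _ _).trans ?_
    rw [norm_mul, norm_mul, norm_mul, hD, hS, Complex.norm_natCast, mul_add]
    push_cast
    gcongr ?_ + ?_
    · by_cases hI : x ∈ I m n
      · simp only [Set.indicator_of_mem hI]
        have hM : (0 : ℝ) ≤ M m n := by positivity
        calc (M m n : ℝ) * (‖∑ j ∈ range (m n), ∑ i ∈ range j, rad m n x ^ i‖ * M m n)
            ≤ M m n * (m n * (m n - 1) * M m n) := by gcongr
          _ = m n * M m n * (M m n * (m n - 1)) := by ring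
      · simp [hI]
    · split_ifs
      · rw [mul_assoc]
        gcongr
      · simp

lemma norm_K_M_le (n : ℕ) (x : G m) :
    ‖K m (M m n) x‖ ≤ kernelBound m n x + (I m n).indicator 1 x := by
  have hM : (0 : ℝ) < M m n := by exact_mod_cast M_pos n
  have hD : ‖D m (M m n) x‖ = M m n * (I m n).indicator 1 x := by
    rw [D_M, norm_indicator_eq_indicator_norm]
    by_cases hI : x ∈ I m n <;> simp [hI]
  rw [K_eq, ← DSum, norm_mul, norm_inv, Complex.norm_natCast, inv_mul_le_iff₀ hM, mul_add, ← hD]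
  exact (norm_add_le _ _).trans (by gcongr; exact norm_DSum_le n x)

end KernelBound

lemma mul_indicator_const_le {α : Type*} {S : Set α} {g : α → ℝ} {a c : ℝ} (ha : 0 ≤ a)
    (hg : ∀ x ∈ S, g x ≤ c) (x : α) :
    g x * S.indicator (fun _ => a) x ≤ S.indicator (fun _ => a * c) x := by
  by_cases hx : x ∈ S
  · simp only [Set.indicator_of_mem hx, mul_comm (g x)]
    exact mul_le_mul_of_nonneg_left (hg x hx) ha
  · simp [hx]

section Integral

variable {m : ℕ → ℕ} [∀ k, NeZero (m k)]
variable (μ : Measure (G m)) [IsProbabilityMeasure μ] [μ.IsAddHaarMeasure]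

lemma measureReal_zeroOn (s : Finset ℕ) : μ.real (zeroOn m s) = (∏ k ∈ s, (m k : ℝ))⁻¹ := by
  have : (zeroOn m s).FiniteIndex :=
    ⟨by rw [index_zeroOn]; exact prod_ne_zero_iff.2 fun k _ => NeZero.ne _⟩
  have h := AddSubgroup.index_mul_measure (zeroOn m s) (measurableSet_zeroOn s) μ
  rw [measure_univ, index_zeroOn, mul_comm] at h
  rw [measureReal_def, ENNReal.eq_inv_of_mul_eq_one_left h, ENNReal.toReal_inv, Nat.cast_prod,
    ENNReal.toReal_prod]
  simp only [ENNReal.toReal_natCast]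

lemma measureReal_I (n : ℕ) : μ.real (I m n) = (M m n : ℝ)⁻¹ := by
  rw [← zeroOn_range, measureReal_zeroOn, M_eq_prod]
  push_cast
  rfl

lemma measureReal_zeroOn_erase {n t : ℕ} (ht : t ∈ range n) :
    μ.real (zeroOn m ((range n).erase t)) = m t / M m n := by
  rw [measureReal_zeroOn, M_eq_prod, Nat.cast_prod, ← mul_prod_erase _ _ ht,
    div_mul_cancel_left₀ (Nat.cast_ne_zero.2 (NeZero.ne (m t)))]

lemma integral_mul_norm_K_M_le {g : G m → ℝ} {w : ℕ → ℝ} (hg : ∀ x, 0 ≤ g x)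
    (hgw : ∀ s, ∀ x ∈ I m s, g x ≤ w s) (n : ℕ) :
    ∫ x, g x * ‖K m (M m n) x‖ ∂μ
      ≤ ∑ t ∈ range n, (m t - 1) * m t * (M m t / M m n * w t) + w n / M m n := by
  set V : ℕ → Set (G m) := fun t => zeroOn m ((range n).erase t)
  set H : G m → ℝ := fun x => ∑ t ∈ range n, (V t).indicator (fun _ => M m t * (m t - 1) * w t) x
    + (I m n).indicator (fun _ => 1 * w n) x
  have hVI : ∀ t ∈ range n, V t ⊆ I m t := fun t ht x hx k hk =>
    mem_zeroOn.1 hx k (mem_erase.2 ⟨hk.ne, mem_range.2 (hk.trans (mem_range.1 ht))⟩)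
  have hgK : ∀ x, g x * ‖K m (M m n) x‖ ≤ H x := fun x =>
    calc g x * ‖K m (M m n) x‖ ≤ g x * (kernelBound m n x + (I m n).indicator (fun _ => 1) x) :=
          mul_le_mul_of_nonneg_left (norm_K_M_le n x) (hg x)
      _ = ∑ t ∈ range n, g x * (V t).indicator (fun _ => M m t * (m t - 1 : ℝ)) x
          + g x * (I m n).indicator (fun _ => 1) x := by rw [kernelBound, mul_add, mul_sum]
      _ ≤ H x := add_le_add (sum_le_sum fun t ht => mul_indicator_const_le
          (mul_nonneg (Nat.cast_nonneg _) (sub_nonneg.2 (Nat.one_le_cast.2 NeZero.one_le)))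
          (fun y hy => hgw t y (hVI t ht hy)) x) (mul_indicator_const_le zero_le_one (hgw n) x)
  have hVmeas : ∀ t, MeasurableSet (V t) := fun t => measurableSet_zeroOn _
  have hImeas : MeasurableSet (I m n) := zeroOn_range (m := m) n ▸ measurableSet_zeroOn _
  have hVint : ∀ t ∈ range n, Integrable ((V t).indicator fun _ => M m t * (m t - 1) * w t) μ :=
    fun t _ => (integrable_const _).indicator (hVmeas t)
  have hIint : Integrable ((I m n).indicator fun _ => 1 * w n) μ :=
    (integrable_const _).indicator hImeas
  calc ∫ x, g x * ‖K m (M m n) x‖ ∂μ ≤ ∫ x, H x ∂μ :=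
        integral_mono_of_nonneg (ae_of_all _ fun x => mul_nonneg (hg x) (norm_nonneg _))
          ((integrable_finsetSum _ hVint).add hIint) (ae_of_all _ hgK)
    _ = ∑ t ∈ range n, μ.real (V t) * (M m t * (m t - 1) * w t) + μ.real (I m n) * (1 * w n) := by
        rw [integral_add (integrable_finsetSum _ hVint) hIint, integral_finsetSum _ hVint,
          integral_indicator_const _ hImeas]
        simp only [integral_indicator_const _ (hVmeas _), smul_eq_mul]
    _ = _ := by
        rw [measureReal_I]
        congr 1
        · exact sum_congr rfl fun t ht => by rw [measureReal_zeroOn_erase μ ht]; ring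
        · ring

end Integral

lemma eLpNorm_add_const_sub_le {α E : Type*} [AddGroup α] [MeasurableSpace α] [MeasurableAdd α]
    [NormedAddCommGroup E] {μ : Measure α} [μ.IsAddRightInvariant] {p : ℝ≥0∞} {f : α → E}
    (hf : AEStronglyMeasurable f μ) (t : α) :
    eLpNorm (fun x => f (x + t) - f x) p μ ≤ LpAddConst p * (eLpNorm f p μ + eLpNorm f p μ) := by
  have hmp := measurePreserving_add_right μ t
  calc eLpNorm (fun x => f (x + t) - f x) p μ = eLpNorm ((fun x => f (x + t)) - f) p μ := rfl
    _ ≤ LpAddConst p * (eLpNorm (fun x => f (x + t)) p μ + eLpNorm f p μ) :=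
        eLpNorm_sub_le' (hf.comp_measurePreserving hmp) hf p
    _ = LpAddConst p * (eLpNorm f p μ + eLpNorm f p μ) := by
        rw [← eLpNorm_comp_measurePreserving hf hmp]
        rfl

section Modulus

variable {m : ℕ → ℕ} {μ : Measure (G m)} {p : ℝ≥0∞} {f : G m → ℂ}

lemma omega_nonneg (s : ℕ) : 0 ≤ omega m μ p f s :=
  Real.iSup_nonneg fun _ => Real.iSup_nonneg fun _ => ENNReal.toReal_nonneg

lemma le_omega [μ.IsAddRightInvariant] (hf : MemLp f p μ) {s : ℕ} {t : G m} (ht : t ∈ I m s) :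
    (eLpNorm (fun x => f (x + t) - f x) p μ).toReal ≤ omega m μ p f s := by
  have hfin : LpAddConst p * (eLpNorm f p μ + eLpNorm f p μ) ≠ ∞ :=
    ENNReal.mul_ne_top (LpAddConst_lt_top p).ne
      (ENNReal.add_ne_top.2 ⟨hf.eLpNorm_ne_top, hf.eLpNorm_ne_top⟩)
  refine le_ciSup₂ (f := fun t (_ : t ∈ I m s) => (eLpNorm (fun x => f (x + t) - f x) p μ).toReal)
    ⟨(LpAddConst p * (eLpNorm f p μ + eLpNorm f p μ)).toReal, ?_⟩ t ht
  simp only [upperBounds, Set.mem_iUnion, Set.mem_range, Set.mem_ofPred_eq]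
  rintro _ ⟨u, _, rfl⟩
  exact ENNReal.toReal_mono hfin (eLpNorm_add_const_sub_le hf.1 u)

end Modulus

theorem fejer_kernel_Mn_integral_estimate_general
    (m : ℕ → ℕ) (hm : ∀ k, 2 ≤ m k)
    (R : ℝ) (hR : IsLUB (Set.range fun k => (m k : ℝ)) R)
    (μ : Measure (G m)) [IsProbabilityMeasure μ] [μ.IsAddHaarMeasure]
    (p : ℝ≥0∞)
    (f : G m → ℂ) (hf : MemLp f p μ) (n : ℕ) :
    ∫ t, (eLpNorm (fun x => f (x + t) - f x) p μ).toReal * ‖K m (M m n) t‖ ∂μ ≤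
      R ^ 2 * ∑ s ∈ Finset.range (n + 1), ((M m s : ℝ) / (M m n : ℝ)) * omega m μ p f s := by
  have : ∀ k, NeZero (m k) := fun k => ⟨by have := hm k; omega⟩
  have hmR : ∀ k, (m k : ℝ) ≤ R := fun k => hR.1 ⟨k, rfl⟩
  have hm2 : ∀ k, (2 : ℝ) ≤ m k := fun k => by exact_mod_cast hm k
  have hM : (1 : ℝ) ≤ M m n := by exact_mod_cast M_pos n
  refine (integral_mul_norm_K_M_le μ (fun _ => ENNReal.toReal_nonneg)
    (fun s t ht => le_omega hf ht) n).trans ?_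
  rw [sum_range_succ, mul_add, mul_sum, div_self (by positivity), one_mul]
  refine add_le_add (sum_le_sum fun t _ => ?_) ?_
  · have := omega_nonneg (μ := μ) (p := p) (f := f) t
    gcongr
    nlinarith [hmR t, hm2 t]
  · have := omega_nonneg (μ := μ) (p := p) (f := f) n
    calc omega m μ p f n / M m n ≤ omega m μ p f n := div_le_self this hM
      _ ≤ R ^ 2 * omega m μ p f n := le_mul_of_one_le_left this (by nlinarith [hmR 0, hm2 0])

/-- integral estimate for the Fejér kernel `K_(M_n)`. -/
theorem fejer_kernel_Mn_integral_estimate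
    (m : ℕ → ℕ) (hm : ∀ k, 2 ≤ m k)
    (R : ℝ) (hR : IsLUB (Set.range fun k => (m k : ℝ)) R)
    (μ : Measure (G m)) [IsProbabilityMeasure μ] [μ.IsAddHaarMeasure]
    (p : ℝ≥0∞) (hp : 1 ≤ p) (hp' : p ≠ ∞)
    (f : G m → ℂ) (hf : MemLp f p μ) (n : ℕ) :
    ∫ t, (eLpNorm (fun x => f (x + t) - f x) p μ).toReal * ‖K m (M m n) t‖ ∂μ ≤
      R ^ 2 * ∑ s ∈ Finset.range (n + 1), ((M m s : ℝ) / (M m n : ℝ)) * omega m μ p f s :=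
  fejer_kernel_Mn_integral_estimate_general m hm R hR μ p f hf n

end VilenkinPaper
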